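/- arXiv:2304.00024 — 2 statements merged into one kernel-verified Lean document; each statement's English description precedes it below -/
import Mathlib

section
/- The number 10 cannot be written as p + 3q with p and q prime, and every even integer n with 10 < n ≤ 200 that is not divisible by 3 can be written as n = p + 3q with p and q prime. -/
set_option maxRecDepth 10000 in
lemma aux14 : ∀ n < 201, (n % 2 = 0 ∧ n % 3 ≠ 0 ∧ 10 < n) →
    ∃ q < 67, Nat.Prime q ∧ 3 * q < n ∧ Nat.Prime (n - 3 * q) := by decide

theorem stmt14 :
    (¬ ∃ p q : ℕ, p.Prime ∧ q.Prime ∧ 10 = p + 3 * q) ∧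
      ∀ n : ℕ, Even n → ¬ 3 ∣ n → 10 < n → n ≤ 200 →
        ∃ p q : ℕ, p.Prime ∧ q.Prime ∧ n = p + 3 * q := by
  constructor
  · rintro ⟨p, q, hp, hq, h⟩
    have hp2 := hp.two_le
    have hq2 := hq.two_le
    have hq' : q = 2 := by omega
    have hp' : p = 4 := by omega
    rw [hp'] at hp
    norm_num at hp
  · intro n hE h3 h10 h200
    rw [Nat.even_iff] at hE
    have h3' : n % 3 ≠ 0 := fun h => h3 (Nat.dvd_of_mod_eq_zero h)
    obtain ⟨q, _, hq, hlt, hp⟩ := aux14 n (by omega) ⟨hE, h3', h10⟩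
    exact ⟨n - 3 * q, q, hp, hq, by omega⟩
end

section
/- Assume that for coprime positive integers m1, m2 there is a bound K such that every integer n > K satisfying gcd(n,m1) = gcd(n,m2) = 1 and n ≡ m1 + m2 (mod 2) can be written as n = m1*p + m2*q with p, q prime. Then for any positive integer d, every integer N > d*K satisfying gcd(N, d*m1) = gcd(N, d*m2) = gcd(d*m1, d*m2) and N ≡ d*m1 + d*m2 (mod 2^(s+1)) (where 2^s is the largest power of 2 dividing gcd(d*m1, d*m2)) can be written as N = (d*m1)*p + (d*m2)*q with p, q prime. -/
theorem stmt15 (m1 m2 : ℕ) (hm1 : 0 < m1) (hm2 : 0 < m2) (hco : Nat.Coprime m1 m2)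
    (K : ℕ)
    (hK : ∀ n : ℕ, K < n → Nat.gcd n m1 = 1 → Nat.gcd n m2 = 1 →
      n ≡ m1 + m2 [MOD 2] → ∃ p q : ℕ, p.Prime ∧ q.Prime ∧ n = m1 * p + m2 * q)
    (d : ℕ) (hd : 0 < d) :
    ∀ N : ℕ, d * K < N →
      Nat.gcd N (d * m1) = Nat.gcd (d * m1) (d * m2) →
      Nat.gcd N (d * m2) = Nat.gcd (d * m1) (d * m2) →
      N ≡ d * m1 + d * m2 [MOD 2 ^ (padicValNat 2 (Nat.gcd (d * m1) (d * m2)) + 1)] →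
      ∃ p q : ℕ, p.Prime ∧ q.Prime ∧ N = (d * m1) * p + (d * m2) * q := by
  intro N hNK hg1 hg2 hmod
  have hg : Nat.gcd (d * m1) (d * m2) = d := by
    rw [Nat.gcd_mul_left, hco, mul_one]
  rw [hg] at hg1 hg2 hmod
  have hdN : d ∣ N := hg1 ▸ Nat.gcd_dvd_left N (d * m1)
  obtain ⟨n, rfl⟩ := hdN
  have hnK : K < n := lt_of_mul_lt_mul_left hNK (Nat.zero_le d)
  have h1 : Nat.gcd n m1 = 1 := by
    rw [Nat.gcd_mul_left] at hg1
    exact Nat.eq_of_mul_eq_mul_left hd (hg1.trans (mul_one d).symm)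
  have h2 : Nat.gcd n m2 = 1 := by
    rw [Nat.gcd_mul_left] at hg2
    exact Nat.eq_of_mul_eq_mul_left hd (hg2.trans (mul_one d).symm)
  -- parity
  set s := padicValNat 2 d with hs
  have hsf : d.factorization 2 = s := Nat.factorization_def d Nat.prime_two
  set d' := d / 2 ^ s with hd'
  have hdd : 2 ^ s * d' = d := by
    rw [hd', ← hsf]; exact Nat.ordProj_mul_ordCompl_eq_self d 2
  have hodd : ¬ (2 ∣ d') := by
    rw [hd', ← hsf]; exact Nat.not_dvd_ordCompl Nat.prime_two hd.ne'
  have hdvd : (2 ^ (s + 1) : ℤ) ∣ ((d * m1 + d * m2 : ℕ) : ℤ) - ((d * n : ℕ) : ℤ) := by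
    exact_mod_cast hmod.dvd
  have hdvd2 : (2 : ℤ) ∣ (d' : ℤ) * ((m1 : ℤ) + m2 - n) := by
    have h2s : ((2 : ℤ) ^ s) * ((d' : ℤ) * ((m1 : ℤ) + m2 - n)) =
        ((d * m1 + d * m2 : ℕ) : ℤ) - ((d * n : ℕ) : ℤ) := by
      push_cast [← hdd]; ring
    have h := hdvd
    rw [← h2s, pow_succ] at h
    exact (mul_dvd_mul_iff_left (by positivity : ((2:ℤ)^s) ≠ 0)).mp h
  have hdvd3 : (2 : ℤ) ∣ ((m1 : ℤ) + m2 - n) := by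
    rcases (Int.prime_two.dvd_or_dvd hdvd2) with h | h
    · exact absurd (by exact_mod_cast h) hodd
    · exact h
  have hpar : n ≡ m1 + m2 [MOD 2] := by
    rw [Nat.modEq_iff_dvd]
    exact_mod_cast hdvd3
  obtain ⟨p, q, hp, hq, hn⟩ := hK n hnK h1 h2 hpar
  exact ⟨p, q, hp, hq, by rw [hn]; ring⟩
end
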